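/- arXiv:2302.01975 — 4 statements merged into one kernel-verified Lean document; each statement's English description precedes it below -/
import Mathlib

section
/- With E, p, δ, δ̃, g as above (0 ≤ δ̃(e) ≤ δ(e) ≤ 1), for any S ⊆ E and any two distinct elements e₁, e₂ ∈ E, the inequality g(S) + g(S ∪ {e₁, e₂}) ≥ g(S ∪ {e₁}) + g(S ∪ {e₂}) holds; i.e., g is supermodular on subsets of E. -/
/-!
Write `g T = ∏ e ∈ p, (δt e if e ∈ T else δ e)`. For `e ∈ p \ T`, adding `e` to `T` lowers `g` by
`(δ e - δt e)` times the product of the remaining factors, and that product is antitone in `T`.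
So the marginal loss of adding `e₁` can only shrink once `e₂` has been added, which is
supermodularity.
-/

open Finset

section

variable {α M R : Type*} [DecidableEq α]

def switchedProd [CommMonoid M] (p : Finset α) (δ δt : α → M) (T : Finset α) : M :=
  ∏ e ∈ p, if e ∈ T then δt e else δ e

namespace switchedProd

section CommMonoid

variable [CommMonoid M] {p : Finset α} {δ δt : α → M}

theorem eq_prod_sdiff_mul_prod_inter (T : Finset α) :
    switchedProd p δ δt T = (∏ e ∈ p \ T, δ e) * ∏ e ∈ p ∩ T, δt e := by
  rw [switchedProd, prod_ite, filter_mem_eq_inter, filter_notMem_eq_sdiff, mul_comm]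

theorem insert_of_notMem {e : α} (he : e ∉ p) (T : Finset α) :
    switchedProd p δ δt (insert e T) = switchedProd p δ δt T := by
  refine prod_congr rfl fun x hx => ?_
  have hxe : x ≠ e := ne_of_mem_of_not_mem hx he
  simp only [mem_insert, hxe, false_or]

end CommMonoid

variable [CommRing R] {p : Finset α} {δ δt : α → R}

theorem sub_insert {e : α} {T : Finset α} (he : e ∈ p) (heT : e ∉ T) :
    switchedProd p δ δt T - switchedProd p δ δt (insert e T) =
      (δ e - δt e) * switchedProd (p.erase e) δ δt T := by
  have hrest : switchedProd (p.erase e) δ δt (insert e T) = switchedProd (p.erase e) δ δt T :=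
    insert_of_notMem (notMem_erase e p) T
  simp only [switchedProd] at hrest ⊢
  rw [← mul_prod_erase p _ he, ← mul_prod_erase p _ he, hrest]
  simp only [mem_insert_self, if_true, heT, if_false]
  ring

variable [PartialOrder R] [IsOrderedRing R]

theorem antitone (hδ : ∀ e ∈ p, 0 ≤ δt e ∧ δt e ≤ δ e) :
    Antitone (switchedProd p δ δt) := by
  intro T T' hTT'
  refine prod_le_prod (fun e he => ?_) fun e he => ?_
  · split_ifs
    exacts [(hδ e he).1, (hδ e he).1.trans (hδ e he).2]
  · split_ifs with heT' heT heT
    exacts [le_rfl, (hδ e he).2, absurd (hTT' heT) heT', le_rfl]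

theorem supermodular (hδ : ∀ e ∈ p, 0 ≤ δt e ∧ δt e ≤ δ e) (S : Finset α) (e₁ e₂ : α) :
    switchedProd p δ δt (insert e₁ S) + switchedProd p δ δt (insert e₂ S) ≤
      switchedProd p δ δt S + switchedProd p δ δt (insert e₁ (insert e₂ S)) := by
  by_cases h₁₂ : e₁ ∈ insert e₂ S
  · rw [insert_eq_of_mem h₁₂]
    exact add_le_add_left (antitone hδ (subset_insert e₁ S)) _
  by_cases hp₁ : e₁ ∈ p
  swap
  · rw [insert_of_notMem hp₁, insert_of_notMem hp₁]
  have hS₁ : e₁ ∉ S := fun h => h₁₂ (mem_insert_of_mem h)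
  have hδ' : ∀ e ∈ p.erase e₁, 0 ≤ δt e ∧ δt e ≤ δ e := fun e he => hδ e (mem_of_mem_erase he)
  have hrest : (δ e₁ - δt e₁) * switchedProd (p.erase e₁) δ δt (insert e₂ S) ≤
      (δ e₁ - δt e₁) * switchedProd (p.erase e₁) δ δt S :=
    mul_le_mul_of_nonneg_left (antitone hδ' (subset_insert e₂ S)) (sub_nonneg.mpr (hδ e₁ hp₁).2)
  rw [← sub_insert hp₁ hS₁, ← sub_insert hp₁ h₁₂, sub_le_sub_iff] at hrest
  rwa [add_comm]

end switchedProd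

end

theorem stmt_1_general {α : Type*} [DecidableEq α] (E p : Finset α) (hp : p ⊆ E)
    (δ δt : α → ℝ) (hδ : ∀ e ∈ E, 0 ≤ δt e ∧ δt e ≤ δ e ∧ δ e ≤ 1)
    (g : Finset α → ℝ)
    (hg : ∀ S, g S = (∏ e ∈ p \ S, δ e) * ∏ e ∈ p ∩ S, δt e)
    (S : Finset α) (e₁ e₂ : α) :
    g (insert e₁ S) + g (insert e₂ S) ≤ g S + g (insert e₁ (insert e₂ S)) := by
  have hg' : g = switchedProd p δ δt :=
    funext fun T => (hg T).trans (switchedProd.eq_prod_sdiff_mul_prod_inter T).symm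
  subst hg'
  exact switchedProd.supermodular (fun e he => ⟨(hδ e (hp he)).1, (hδ e (hp he)).2.1⟩) S e₁ e₂

/-- The path-reliability function `g` is supermodular (pairwise form). -/
theorem stmt_1 {α : Type*} [DecidableEq α] (E p : Finset α) (hp : p ⊆ E)
    (δ δt : α → ℝ) (hδ : ∀ e ∈ E, 0 ≤ δt e ∧ δt e ≤ δ e ∧ δ e ≤ 1)
    (g : Finset α → ℝ)
    (hg : ∀ S, g S = (∏ e ∈ p \ S, δ e) * ∏ e ∈ p ∩ S, δt e)
    (S : Finset α) (hS : S ⊆ E) (e₁ e₂ : α) (he₁ : e₁ ∈ E) (he₂ : e₂ ∈ E)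
    (hne : e₁ ≠ e₂) :
    g (insert e₁ S) + g (insert e₂ S) ≤ g S + g (insert e₁ (insert e₂ S)) :=
  stmt_1_general E p hp δ δt hδ g hg S e₁ e₂
end

section
/- With the setup as above and assuming δ(e) > 0 for all e ∈ p, for any S ⊆ E and distinct e₁, e₂ ∈ E \ S, the identity g(S) + g(S ∪ {e₁, e₂}) − g(S ∪ {e₁}) − g(S ∪ {e₂}) = g(S) · (1 − δ̃(e₁)/δ(e₁)·[e₁ ∈ p]' ) · (1 − δ̃(e₂)/δ(e₂)·[e₂∈p]') holds when e₁, e₂ ∈ p, where in that case the right-hand side equals g(S)·(1 − δ̃(e₁)/δ(e₁))·(1 − δ̃(e₂)/δ(e₂)). -/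
/-! Adding an edge `e ∈ p \ S` to `S` multiplies `g` by `δt e / δ e`, so all four terms are `g S`
times products of these ratios and the identity becomes a ring identity. -/

theorem Finset.prod_sdiff_insert_mul_prod_inter_insert {α K : Type*} [DecidableEq α] [Field K]
    {p S : Finset α} {e : α} (hep : e ∈ p) (heS : e ∉ S) (f g : α → K) (hfe : f e ≠ 0) :
    (∏ x ∈ p \ insert e S, f x) * ∏ x ∈ p ∩ insert e S, g x
      = (∏ x ∈ p \ S, f x) * (∏ x ∈ p ∩ S, g x) * (g e / f e) := by
  have he_inter : e ∉ p ∩ S := fun h => heS (Finset.mem_inter.1 h).2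
  rw [Finset.sdiff_insert, Finset.inter_insert_of_mem hep, Finset.prod_insert he_inter,
    ← Finset.mul_prod_erase (p \ S) f (Finset.mem_sdiff.2 ⟨hep, heS⟩)]
  field_simp

theorem stmt_3_general {α : Type*} [DecidableEq α] (p : Finset α)
    (δ δt : α → ℝ)
    (hδ : ∀ e ∈ p, 0 < δ e ∧ δ e ≤ 1 ∧ 0 ≤ δt e ∧ δt e ≤ δ e)
    (g : Finset α → ℝ)
    (hg : ∀ S, g S = (∏ e ∈ p \ S, δ e) * ∏ e ∈ p ∩ S, δt e)
    (S : Finset α)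
    (e₁ e₂ : α) (he₁p : e₁ ∈ p) (he₂p : e₂ ∈ p)
    (he₁S : e₁ ∉ S) (he₂S : e₂ ∉ S) (hne : e₁ ≠ e₂) :
    g S + g (insert e₁ (insert e₂ S)) - g (insert e₁ S) - g (insert e₂ S)
      = g S * (1 - δt e₁ / δ e₁) * (1 - δt e₂ / δ e₂) := by
  have g_insert : ∀ {e T}, e ∈ p → e ∉ T → g (insert e T) = g T * (δt e / δ e) :=
    fun hep heT => by
      rw [hg, hg]
      exact Finset.prod_sdiff_insert_mul_prod_inter_insert hep heT δ δt (hδ _ hep).1.ne'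
  rw [g_insert he₁p (by simp [hne, he₁S]), g_insert he₂p he₂S, g_insert he₁p he₁S]
  ring

/-- Identity for the supermodularity gap of `g` when both new edges lie on the path. -/
theorem stmt_3 {α : Type*} [DecidableEq α] (E p : Finset α) (hp : p ⊆ E)
    (δ δt : α → ℝ)
    (hδ : ∀ e ∈ p, 0 < δ e ∧ δ e ≤ 1 ∧ 0 ≤ δt e ∧ δt e ≤ δ e)
    (g : Finset α → ℝ)
    (hg : ∀ S, g S = (∏ e ∈ p \ S, δ e) * ∏ e ∈ p ∩ S, δt e)
    (S : Finset α) (hS : S ⊆ E)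
    (e₁ e₂ : α) (he₁p : e₁ ∈ p) (he₂p : e₂ ∈ p)
    (he₁S : e₁ ∉ S) (he₂S : e₂ ∉ S) (hne : e₁ ≠ e₂) :
    g S + g (insert e₁ (insert e₂ S)) - g (insert e₁ S) - g (insert e₂ S)
      = g S * (1 - δt e₁ / δ e₁) * (1 - δt e₂ / δ e₂) :=
  stmt_3_general p δ δt hδ g hg S e₁ e₂ he₁p he₂p he₁S he₂S hne
end

section
/- Let E be finite, and let {(p_k, θ_k, g_k)}_{k∈K} be a finite family where each p_k ⊆ E, θ_k ≥ 0, and g_k(S) = (∏_{e ∈ p_k \ S} δ_k(e)) · (∏_{e ∈ p_k ∩ S} δ̃_k(e)) with 0 ≤ δ̃_k(e) ≤ δ_k(e) ≤ 1. Then the function F(S) = 1 − ∑_{k∈K} θ_k · g_k(S) is submodular and non-decreasing in S. -/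
/-!
Writing `gₖ(S) = ∏_{e ∈ pₖ} (δ̃ₖ(e) if e ∈ S else δₖ(e))`, each `gₖ` is non-negative and antitone,
and `gₖ(S ∪ T) gₖ(S ∩ T) = gₖ(S) gₖ(T)` factor by factor. For reals with `0 ≤ u ≤ b ≤ v`, `a ≤ v`
and `u v = a b` one has `a + b ≤ u + v`; taking `u = gₖ(S ∪ T)`, `v = gₖ(S ∩ T)`, `a = gₖ(S)`,
`b = gₖ(T)` shows that `gₖ` is supermodular. A non-negative combination of antitone supermodular
functions is again one, so `F = 1 - ∑ θₖ gₖ` is monotone and submodular.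
-/

open Finset

lemma add_le_add_of_mul_eq_mul_of_le {u v a b : ℝ} (hu : 0 ≤ u) (hub : u ≤ b)
    (hav : a ≤ v) (hbv : b ≤ v) (hm : u * v = a * b) : a + b ≤ u + v := by
  nlinarith [mul_nonneg (sub_nonneg.2 hav) (sub_nonneg.2 hbv),
    mul_nonneg (sub_nonneg.2 hub) (sub_nonneg.2 hbv)]

namespace Finset

variable {α : Type*} [DecidableEq α]

lemma prod_piecewise_union_mul_prod_piecewise_inter {M : Type*} [CommMonoid M]
    (s S T : Finset α) (f g : α → M) :
    (∏ e ∈ s, (S ∪ T).piecewise f g e) * ∏ e ∈ s, (S ∩ T).piecewise f g e =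
      (∏ e ∈ s, S.piecewise f g e) * ∏ e ∈ s, T.piecewise f g e := by
  rw [← prod_mul_distrib, ← prod_mul_distrib]
  refine prod_congr rfl fun e _ => ?_
  by_cases hS : e ∈ S <;> by_cases hT : e ∈ T <;> simp [piecewise, hS, hT, mul_comm]

variable {s : Finset α} {f g : α → ℝ}

lemma piecewise_nonneg (hf : ∀ e, 0 ≤ f e) (hfg : ∀ e, f e ≤ g e) (S : Finset α) (e : α) :
    0 ≤ S.piecewise f g e := by
  by_cases he : e ∈ S <;> simp [piecewise, he, hf e, (hf e).trans (hfg e)]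

lemma antitone_prod_piecewise (hf : ∀ e, 0 ≤ f e) (hfg : ∀ e, f e ≤ g e) :
    Antitone fun S : Finset α => ∏ e ∈ s, S.piecewise f g e := by
  intro S T hST
  refine prod_le_prod (fun e _ => ?_) fun e _ => ?_
  · exact piecewise_nonneg hf hfg T e
  · by_cases heS : e ∈ S
    · simp [piecewise, heS, hST heS]
    · by_cases heT : e ∈ T <;> simp [piecewise, heS, heT, hfg e]

lemma prod_piecewise_add_le_union_add_inter (hf : ∀ e, 0 ≤ f e) (hfg : ∀ e, f e ≤ g e)
    (S T : Finset α) :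
    ∏ e ∈ s, S.piecewise f g e + ∏ e ∈ s, T.piecewise f g e ≤
      ∏ e ∈ s, (S ∪ T).piecewise f g e + ∏ e ∈ s, (S ∩ T).piecewise f g e := by
  have hanti := antitone_prod_piecewise (s := s) hf hfg
  exact add_le_add_of_mul_eq_mul_of_le (prod_nonneg fun e _ => piecewise_nonneg hf hfg _ e)
    (hanti subset_union_right) (hanti inter_subset_left) (hanti inter_subset_right)
    (prod_piecewise_union_mul_prod_piecewise_inter s S T f g)

end Finset

/-- The defender's objective `F(S) = 1 - ∑ₖ θₖ gₖ(S)` is submodular and non-decreasing. -/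
theorem stmt_6 {α ι : Type*} [DecidableEq α] [Fintype ι]
    (p : ι → Finset α) (θ : ι → ℝ) (hθ : ∀ k, 0 ≤ θ k)
    (δ δt : ι → α → ℝ)
    (hδ : ∀ k, ∀ e, 0 ≤ δt k e ∧ δt k e ≤ δ k e ∧ δ k e ≤ 1)
    (g : ι → Finset α → ℝ)
    (hg : ∀ k S, g k S = (∏ e ∈ p k \ S, δ k e) * ∏ e ∈ p k ∩ S, δt k e)
    (F : Finset α → ℝ)
    (hF : ∀ S, F S = 1 - ∑ k, θ k * g k S) :
    (∀ S₁ S₂ : Finset α, F (S₁ ∪ S₂) + F (S₁ ∩ S₂) ≤ F S₁ + F S₂) ∧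
    (∀ S₁ S₂ : Finset α, S₁ ⊆ S₂ → F S₁ ≤ F S₂) := by
  have hg' : ∀ k S, g k S = ∏ e ∈ p k, S.piecewise (δt k) (δ k) e := fun k S => by
    rw [hg, prod_piecewise, mul_comm]
  have h0 : ∀ k e, 0 ≤ δt k e := fun k e => (hδ k e).1
  have hle : ∀ k e, δt k e ≤ δ k e := fun k e => (hδ k e).2.1
  simp only [hF, hg']
  constructor
  · intro S₁ S₂
    have := sum_le_sum fun k (_ : k ∈ univ) => mul_le_mul_of_nonneg_left
      (prod_piecewise_add_le_union_add_inter (s := p k) (h0 k) (hle k) S₁ S₂) (hθ k)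
    simp only [mul_add, sum_add_distrib] at this
    linarith
  · intro S₁ S₂ hS
    have := sum_le_sum fun k (_ : k ∈ univ) =>
      mul_le_mul_of_nonneg_left (antitone_prod_piecewise (s := p k) (h0 k) (hle k) hS) (hθ k)
    linarith
end

section
/- Let f : Set E → ℝ≥0 be a non-decreasing submodular function on a finite set E with f(∅) = 0, and let OPT = f(S*) where S* is any subset with |S*| ≤ b maximizing f among sets of cardinality at most b. Let G_b be the set produced by b steps of the greedy algorithm that at each step adds an element maximizing the marginal gain. Then f(G_b) ≥ (1 − (1 − 1/b)^b) · OPT ≥ (1 − 1/e) · OPT. -/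
/-!
Against any competitor `S*` with `|S*| ≤ b`, submodularity bounds the gap `f S* - f G` by the sum
of the marginal gains of the elements of `S*` at `G`, hence by `b` times the greedy gain. Each greedy
step therefore shrinks the gap by a factor `1 - 1/b`, so after `b` steps it is at most
`(1 - 1/b)^b · f S* ≤ e⁻¹ · f S*`.
-/

open Finset

section Submodular

variable {α : Type*} [DecidableEq α] {f : Finset α → ℝ}

theorem sub_le_sum_insert_sub_of_submodular
    (hsub : ∀ S₁ S₂ : Finset α, f (S₁ ∪ S₂) + f (S₁ ∩ S₂) ≤ f S₁ + f S₂) (A T : Finset α) :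
    f (A ∪ T) - f A ≤ ∑ e ∈ T, (f (insert e A) - f A) := by
  induction T using Finset.induction_on with
  | empty => simp
  | @insert e T he ih =>
    have hunion : (A ∪ T) ∪ insert e A = A ∪ insert e T := by grind
    have hinter : (A ∪ T) ∩ insert e A = A := by grind
    have hAT := hsub (A ∪ T) (insert e A)
    rw [hunion, hinter] at hAT
    rw [sum_insert he]
    linarith

theorem sub_le_card_mul_of_gain_le
    (hmono : ∀ S₁ S₂ : Finset α, S₁ ⊆ S₂ → f S₁ ≤ f S₂)
    (hsub : ∀ S₁ S₂ : Finset α, f (S₁ ∪ S₂) + f (S₁ ∩ S₂) ≤ f S₁ + f S₂)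
    {A : Finset α} {e : α} (hmax : ∀ e' ∉ A, f (insert e' A) - f A ≤ f (insert e A) - f A)
    (S : Finset α) :
    f S - f A ≤ S.card * (f (insert e A) - f A) := by
  have hgain : 0 ≤ f (insert e A) - f A := sub_nonneg.2 (hmono _ _ (subset_insert e A))
  have hterm : ∀ e' ∈ S, f (insert e' A) - f A ≤ f (insert e A) - f A := by
    intro e' _
    by_cases he' : e' ∈ A
    · simpa [insert_eq_of_mem he'] using hgain
    · exact hmax e' he'
  calc f S - f A ≤ f (A ∪ S) - f A := by gcongr; exact hmono _ _ subset_union_right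
    _ ≤ ∑ e' ∈ S, (f (insert e' A) - f A) := sub_le_sum_insert_sub_of_submodular hsub A S
    _ ≤ ∑ _e' ∈ S, (f (insert e A) - f A) := sum_le_sum hterm
    _ = S.card * (f (insert e A) - f A) := by rw [sum_const, nsmul_eq_mul]

theorem sub_insert_le_mul_sub_of_gain_le
    (hmono : ∀ S₁ S₂ : Finset α, S₁ ⊆ S₂ → f S₁ ≤ f S₂)
    (hsub : ∀ S₁ S₂ : Finset α, f (S₁ ∪ S₂) + f (S₁ ∩ S₂) ≤ f S₁ + f S₂)
    {A : Finset α} {e : α} (hmax : ∀ e' ∉ A, f (insert e' A) - f A ≤ f (insert e A) - f A)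
    {S : Finset α} {b : ℕ} (hb : 0 < b) (hcard : S.card ≤ b) :
    f S - f (insert e A) ≤ (1 - 1 / (b : ℝ)) * (f S - f A) := by
  have hgain : 0 ≤ f (insert e A) - f A := sub_nonneg.2 (hmono _ _ (subset_insert e A))
  have hgap : f S - f A ≤ b * (f (insert e A) - f A) :=
    (sub_le_card_mul_of_gain_le hmono hsub hmax S).trans
      (mul_le_mul_of_nonneg_right (by exact_mod_cast hcard) hgain)
  have hbR : (0 : ℝ) < b := by exact_mod_cast hb
  have hshare : 1 / (b : ℝ) * (f S - f A) ≤ f (insert e A) - f A := by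
    rw [one_div_mul_eq_div, div_le_iff₀ hbR]; linarith
  linarith

end Submodular

theorem le_pow_mul_of_forall_lt_le_mul {x : ℕ → ℝ} {r : ℝ} (hr : 0 ≤ r) {n : ℕ}
    (h : ∀ i < n, x (i + 1) ≤ r * x i) : x n ≤ r ^ n * x 0 := by
  induction n with
  | zero => simp
  | succ n ih =>
    calc x (n + 1) ≤ r * x n := h n n.lt_succ_self
      _ ≤ r * (r ^ n * x 0) := by
        gcongr; exact ih fun i hi => h i (hi.trans n.lt_succ_self)
      _ = r ^ (n + 1) * x 0 := by ring

theorem stmt_11_general {α : Type*} [DecidableEq α] [Fintype α]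
    (f : Finset α → ℝ)
    (hnonneg : ∀ S : Finset α, 0 ≤ f S)
    (hmono : ∀ S₁ S₂ : Finset α, S₁ ⊆ S₂ → f S₁ ≤ f S₂)
    (hsub : ∀ S₁ S₂ : Finset α, f (S₁ ∪ S₂) + f (S₁ ∩ S₂) ≤ f S₁ + f S₂)
    (b : ℕ) (hb : 1 ≤ b)
    (Sstar : Finset α) (hcard : Sstar.card ≤ b)
    (G : ℕ → Finset α) (hG0 : G 0 = ∅)
    (hGstep : ∀ i < b, ∃ e ∈ Finset.univ \ G i,
      G (i + 1) = insert e (G i) ∧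
      ∀ e' ∈ Finset.univ \ G i,
        f (insert e' (G i)) - f (G i) ≤ f (insert e (G i)) - f (G i)) :
    (1 - (1 - 1 / (b : ℝ)) ^ b) * f Sstar ≤ f (G b) ∧
    (1 - 1 / Real.exp 1) * f Sstar ≤ (1 - (1 - 1 / (b : ℝ)) ^ b) * f Sstar := by
  have hratio : 0 ≤ 1 - 1 / (b : ℝ) := by
    rw [sub_nonneg, div_le_one (by positivity)]; exact_mod_cast hb
  have hstep : ∀ i < b, f Sstar - f (G (i + 1)) ≤ (1 - 1 / (b : ℝ)) * (f Sstar - f (G i)) := by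
    intro i hi
    obtain ⟨e, -, hGe, hmax⟩ := hGstep i hi
    rw [hGe]
    exact sub_insert_le_mul_sub_of_gain_le hmono hsub
      (fun e' he' => hmax e' (by simpa using he')) hb hcard
  have hdecay := le_pow_mul_of_forall_lt_le_mul (x := fun i => f Sstar - f (G i)) hratio hstep
  have hexp : (1 - 1 / (b : ℝ)) ^ b ≤ 1 / Real.exp 1 := by
    simpa [Real.exp_neg] using
      Real.one_sub_div_pow_le_exp_neg (n := b) (t := 1) (by exact_mod_cast hb)
  simp only [hG0] at hdecay
  constructor
  · nlinarith [hnonneg ∅, pow_nonneg hratio b, hnonneg Sstar]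
  · exact mul_le_mul_of_nonneg_right (by linarith) (hnonneg Sstar)

/-- Nemhauser–Wolsey–Fisher greedy guarantee for monotone submodular maximization
subject to a cardinality constraint. -/
theorem stmt_11 {α : Type*} [DecidableEq α] [Fintype α]
    (f : Finset α → ℝ)
    (hnonneg : ∀ S : Finset α, 0 ≤ f S)
    (hmono : ∀ S₁ S₂ : Finset α, S₁ ⊆ S₂ → f S₁ ≤ f S₂)
    (hsub : ∀ S₁ S₂ : Finset α, f (S₁ ∪ S₂) + f (S₁ ∩ S₂) ≤ f S₁ + f S₂)
    (h0 : f ∅ = 0)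
    (b : ℕ) (hb : 1 ≤ b)
    (Sstar : Finset α) (hcard : Sstar.card ≤ b)
    (hopt : ∀ S : Finset α, S.card ≤ b → f S ≤ f Sstar)
    (G : ℕ → Finset α) (hG0 : G 0 = ∅)
    (hGstep : ∀ i < b, ∃ e ∈ Finset.univ \ G i,
      G (i + 1) = insert e (G i) ∧
      ∀ e' ∈ Finset.univ \ G i,
        f (insert e' (G i)) - f (G i) ≤ f (insert e (G i)) - f (G i)) :
    (1 - (1 - 1 / (b : ℝ)) ^ b) * f Sstar ≤ f (G b) ∧
    (1 - 1 / Real.exp 1) * f Sstar ≤ (1 - (1 - 1 / (b : ℝ)) ^ b) * f Sstar :=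
  stmt_11_general f hnonneg hmono hsub b hb Sstar hcard G hG0 hGstep
end
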